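/- arXiv:0901.3714 — 3 statements merged into one kernel-verified Lean document; each statement's English description precedes it below -/
import Mathlib

section
/- Let 𝔽_q be a finite field with q elements, F = 𝔽_q(T) the field of rational functions over 𝔽_q, and let D be a division ring equipped with an F-algebra structure such that the image of F is the center of D and dim_F D = 4 (a quaternion division algebra over F). If γ ∈ D satisfies γ^n = 1 for some integer n ≥ 1, then γ^{q² − 1} = 1; that is, γ lies in a finite subfield of D of cardinality dividing q², so either γ ∈ 𝔽_q^× or γ generates a copy of 𝔽_{q²}. -/
/-!
A torsion element `γ` is integral over `𝔽_q`. Every non-constant rational function is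
transcendental, so `𝔽_q` is integrally closed in `𝔽_q(T)` and the minimal polynomial of `γ`
over `𝔽_q` is also its minimal polynomial over `𝔽_q(T)`. There its degree is at most `2`: a
non-central `γ` generates a proper subalgebra of `D`, whose dimension is a proper divisor of `4`.
An irreducible polynomial over `𝔽_q` of degree dividing `2` divides `X ^ q ^ 2 - X`, so
`γ ^ q ^ 2 = γ`.
-/

open Polynomial Module

instance RatFunc.isIntegrallyClosedIn (k : Type*) [Field k] :
    IsIntegrallyClosedIn k (RatFunc k) where
  algebraMap_injective := (algebraMap k (RatFunc k)).injective
  isIntegral_iff {f} := by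
    refine ⟨fun hf => ?_, ?_⟩
    · by_contra h
      exact RatFunc.transcendental_of_ne_C (f := f) (by simpa [eq_comm] using h) hf.isAlgebraic
    · rintro ⟨c, rfl⟩
      exact isIntegral_algebraMap

theorem minpoly_eq_map_of_isIntegrallyClosedIn {k K A : Type*} [Field k] [Field K] [Ring A]
    [Algebra k K] [Algebra K A] [Algebra k A] [IsScalarTower k K A] [IsIntegrallyClosedIn k K]
    {x : A} (hx : IsIntegral k x) : minpoly K x = (minpoly k x).map (algebraMap k K) := by
  have hdvd : minpoly K x ∣ (minpoly k x).map (algebraMap k K) :=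
    minpoly.dvd K x (by rw [aeval_map_algebraMap, minpoly.aeval])
  have hlifts : minpoly K x ∈ lifts (algebraMap k K) :=
    (lifts_iff_coeff_lifts _).mpr fun i =>
      IsIntegrallyClosedIn.algebraMap_eq_of_integral <| isIntegral_coeff_of_dvd _ _
        (minpoly.monic hx) (minpoly.monic hx.tower_top) hdvd i
  obtain ⟨p, hp, -, -⟩ := lifts_and_natDegree_eq_and_monic hlifts (minpoly.monic hx.tower_top)
  have hdvd' : minpoly k x ∣ p :=
    minpoly.dvd k x (by rw [← aeval_map_algebraMap K, hp, minpoly.aeval])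
  refine eq_of_monic_of_associated (minpoly.monic hx.tower_top) ((minpoly.monic hx).map _)
    (associated_of_dvd_dvd hdvd ?_)
  exact hp ▸ Polynomial.map_dvd _ hdvd'

theorem Subalgebra.finrank_dvd_finrank {F D : Type*} [Field F] [DivisionRing D] [Algebra F D]
    [FiniteDimensional F D] (S : Subalgebra F D) : finrank F S ∣ finrank F D := by
  let := divisionRingOfFiniteDimensional F S
  exact Module.finrank_dvd_finrank_right F S D

theorem natDegree_minpoly_le_two_of_finrank_eq_four {F D : Type*} [Field F] [DivisionRing D]
    [Algebra F D] (hcenter : (algebraMap F D).range = Subring.center D)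
    (hdim : finrank F D = 4) (x : D) : (minpoly F x).natDegree ≤ 2 := by
  have : FiniteDimensional F D := .of_finrank_pos (by omega)
  by_cases hx : x ∈ (algebraMap F D).range
  · exact (minpoly.natDegree_eq_one_iff.mpr hx).trans_le one_le_two
  set K := Algebra.adjoin F {x}
  have hK : Subalgebra.toSubmodule K ≠ ⊤ := by
    intro htop
    refine hx (hcenter ▸ Subring.mem_center_iff.mpr fun y => ?_)
    have hy : y ∈ K := by simp [← Subalgebra.mem_toSubmodule, htop]
    exact (Algebra.commute_of_mem_adjoin_self hy).eq.symm
  have hlt : finrank F K < 4 := hdim ▸ Submodule.finrank_lt hK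
  have hdvd : finrank F K ∣ 4 := hdim ▸ K.finrank_dvd_finrank
  have hle : (minpoly F x).natDegree ≤ finrank F K :=
    minpoly.algHom_eq K.val Subtype.val_injective ⟨x, Algebra.self_mem_adjoin_singleton F x⟩ ▸
      minpoly.natDegree_le _
  interval_cases finrank F K <;> omega

theorem pow_card_pow_eq_self_of_natDegree_minpoly_dvd {k A : Type*} [Field k] [Finite k] [Ring A]
    [IsDomain A] [Algebra k A] {x : A} (hx : IsIntegral k x) {m : ℕ}
    (hm : (minpoly k x).natDegree ∣ m) : x ^ Nat.card k ^ m = x := by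
  obtain ⟨r, hr⟩ := (minpoly.irreducible hx).natDegree_dvd_iff_dvd_X_pow_card_pow_sub_X.mp hm
  simpa [minpoly.aeval, sub_eq_zero] using congrArg (aeval x) hr

/-- Let `𝔽_q` be a finite field, `F = 𝔽_q(T)`, and `D` a quaternion division algebra over
`F` (a division ring with an `F`-algebra structure whose image of `F` is the center and
with `dim_F D = 4`).  If `γ ∈ D` satisfies `γ^n = 1` for some `n ≥ 1`, then
`γ^(q² − 1) = 1`. -/
theorem torsion_in_quaternion_algebra_over_ratFunc
    (𝔽 : Type*) [Field 𝔽] [Fintype 𝔽] (q : ℕ) (hq : Fintype.card 𝔽 = q)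
    (D : Type*) [DivisionRing D] [Algebra (RatFunc 𝔽) D]
    (hcenter : (algebraMap (RatFunc 𝔽) D).range = Subring.center D)
    (hdim : Module.finrank (RatFunc 𝔽) D = 4)
    (γ : D) (n : ℕ) (hn : 1 ≤ n) (hγ : γ ^ n = 1) :
    γ ^ (q ^ 2 - 1) = 1 := by
  let : Algebra 𝔽 D := Algebra.compHom D (algebraMap 𝔽 (RatFunc 𝔽))
  have : IsScalarTower 𝔽 (RatFunc 𝔽) D := IsScalarTower.of_algebraMap_eq fun _ => rfl
  have hγ0 : γ ≠ 0 := by rintro rfl; simp [zero_pow (by omega : n ≠ 0)] at hγ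
  have hint : IsIntegral 𝔽 γ := ⟨X ^ n - 1, monic_X_pow_sub_C 1 (by omega), by simp [hγ]⟩
  have hdeg : (minpoly 𝔽 γ).natDegree ∣ 2 := by
    have hle := natDegree_minpoly_le_two_of_finrank_eq_four hcenter hdim γ
    rw [minpoly_eq_map_of_isIntegrallyClosedIn hint, natDegree_map] at hle
    have hpos := minpoly.natDegree_pos hint
    interval_cases (minpoly 𝔽 γ).natDegree <;> norm_num
  have hfrob : γ ^ q ^ 2 = γ := by
    simpa [hq] using pow_card_pow_eq_self_of_natDegree_minpoly_dvd hint hdeg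
  have hq0 : q ^ 2 ≠ 0 := pow_ne_zero 2 (hq ▸ Fintype.card_ne_zero)
  exact mul_right_cancel₀ hγ0 (by rw [pow_sub_one_mul hq0, hfrob, one_mul])
end

section
/- Let F be a field and D a division ring equipped with an F-algebra structure (so the image of F is central in D). Let γ₁, γ₂ ∈ D be such that the F-subalgebras F[γ₁] and F[γ₂] each have dimension 2 over F and F[γ₁] ≠ F[γ₂]. Then the four elements 1, γ₁, γ₂, γ₁γ₂ are linearly independent over F; in particular, if moreover dim_F D = 4, they form an F-basis of D. -/
/-- In a division ring, a finite-dimensional subalgebra over a field is closed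
under inverses. -/
lemma aux_inv_mem {F : Type*} [Field F] {D : Type*} [DivisionRing D] [Algebra F D]
    (S : Subalgebra F D) [FiniteDimensional F S] {x : D} (hx : x ∈ S) (hx0 : x ≠ 0) :
    x⁻¹ ∈ S := by
  set xS : S := ⟨x, hx⟩ with hxS
  have hxS0 : xS ≠ 0 := by
    simp only [hxS, ne_eq, Subtype.ext_iff]
    exact hx0
  have hinj : Function.Injective (LinearMap.mulLeft F xS) := by
    intro a b hab
    have : xS * a = xS * b := hab
    exact mul_left_cancel₀ hxS0 this
  have hsurj : Function.Surjective (LinearMap.mulLeft F xS) :=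
    (LinearMap.injective_iff_surjective).mp hinj
  obtain ⟨y, hy⟩ := hsurj 1
  have hxy : x * (y : D) = 1 := by
    have h' : ((xS * y : S) : D) = ((1 : S) : D) := congrArg Subtype.val hy
    rw [Subalgebra.coe_mul, Subalgebra.coe_one] at h'
    exact h'
  have : x⁻¹ = (y : D) := inv_eq_of_mul_eq_one_right hxy
  rw [this]
  exact y.2

/-- If `γ ∉` the image of `F`, then `algebraMap F D a + b • γ = 0` forces `a = b = 0`. -/
lemma aux_indep {F : Type*} [Field F] {D : Type*} [DivisionRing D] [Algebra F D]
    {γ : D} (hγ : γ ∉ Set.range (algebraMap F D)) {a b : F}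
    (h : algebraMap F D a + b • γ = 0) : a = 0 ∧ b = 0 := by
  by_cases hb : b = 0
  · refine ⟨?_, hb⟩
    rw [hb, zero_smul, add_zero] at h
    exact (algebraMap F D).injective (h.trans (map_zero _).symm)
  · exfalso
    apply hγ
    refine ⟨b⁻¹ * (-a), ?_⟩
    have : b • γ = algebraMap F D (-a) := by
      rw [map_neg]; linear_combination (norm := module) h
    rw [map_mul]
    rw [← this, Algebra.smul_def, ← mul_assoc, ← map_mul, inv_mul_cancel₀ hb, map_one, one_mul]

/-- Let `F` be a field and `D` a division ring which is an `F`-algebra.  If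
`γ₁, γ₂ ∈ D` are such that `F[γ₁]` and `F[γ₂]` are `2`-dimensional over `F` and
`F[γ₁] ≠ F[γ₂]`, then `1, γ₁, γ₂, γ₁γ₂` are linearly independent over `F`; in
particular, if `dim_F D = 4`, they form an `F`-basis of `D`. -/
theorem linearIndependent_of_two_quadratic_subalgebras
    (F : Type*) [Field F] (D : Type*) [DivisionRing D] [Algebra F D]
    (γ₁ γ₂ : D)
    (h₁ : Module.finrank F (Algebra.adjoin F {γ₁}) = 2)
    (h₂ : Module.finrank F (Algebra.adjoin F {γ₂}) = 2)
    (hne : Algebra.adjoin F {γ₁} ≠ Algebra.adjoin F {γ₂}) :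
    LinearIndependent F ![1, γ₁, γ₂, γ₁ * γ₂] ∧
      (Module.finrank F D = 4 →
        Submodule.span F (Set.range ![1, γ₁, γ₂, γ₁ * γ₂]) = ⊤) := by
  set S₁ := Algebra.adjoin F {γ₁} with hS₁
  set S₂ := Algebra.adjoin F {γ₂} with hS₂
  have hfd₁ : FiniteDimensional F S₁ := FiniteDimensional.of_finrank_pos (by omega)
  -- γ₁ is not in the image of F
  have hγ₁ : γ₁ ∉ Set.range (algebraMap F D) := by
    rintro ⟨c, hc⟩
    have hbot : S₁ = ⊥ := by
      apply le_antisymm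
      · rw [hS₁]
        apply Algebra.adjoin_le
        rintro x hx
        rw [Set.mem_singleton_iff] at hx
        subst hx
        exact ⟨c, hc⟩
      · exact bot_le
    rw [hbot, Subalgebra.finrank_bot] at h₁
    omega
  -- γ₂ ∉ S₁
  have hγ₂ : γ₂ ∉ S₁ := by
    intro hmem
    apply hne
    have hle : S₂ ≤ S₁ := by
      rw [hS₂]
      apply Algebra.adjoin_le
      rintro x hx
      rw [Set.mem_singleton_iff] at hx
      subst hx
      exact hmem
    have : Subalgebra.toSubmodule S₂ = Subalgebra.toSubmodule S₁ := by
      haveI : FiniteDimensional F (Subalgebra.toSubmodule S₁) := hfd₁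
      apply Submodule.eq_of_le_of_finrank_le hle
      rw [Subalgebra.finrank_toSubmodule, Subalgebra.finrank_toSubmodule, h₁, h₂]
    exact (Subalgebra.toSubmodule_injective this).symm
  -- main linear independence
  have hind : LinearIndependent F ![1, γ₁, γ₂, γ₁ * γ₂] := by
    rw [Fintype.linearIndependent_iff]
    intro g hg
    rw [Fin.sum_univ_four] at hg
    simp only [Matrix.cons_val_zero, Matrix.cons_val_one, Matrix.head_cons,
      Matrix.cons_val_two, Matrix.tail_cons, Matrix.cons_val_three] at hg
    -- hg : g 0 • 1 + g 1 • γ₁ + g 2 • γ₂ + g 3 • (γ₁ * γ₂) = 0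
    set u : D := algebraMap F D (g 2) + g 3 • γ₁ with hu
    set v : D := algebraMap F D (g 0) + g 1 • γ₁ with hv
    have hu₁ : u ∈ S₁ := by
      apply add_mem (Subalgebra.algebraMap_mem S₁ (g 2))
      exact Subalgebra.smul_mem S₁ (Algebra.self_mem_adjoin_singleton F γ₁) (g 3)
    have hv₁ : v ∈ S₁ := by
      apply add_mem (Subalgebra.algebraMap_mem S₁ (g 0))
      exact Subalgebra.smul_mem S₁ (Algebra.self_mem_adjoin_singleton F γ₁) (g 1)
    have key : v + u * γ₂ = 0 := by
      rw [hu, hv, add_mul, smul_mul_assoc, ← Algebra.smul_def,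
        Algebra.algebraMap_eq_smul_one (g 0), ← add_assoc]
      exact hg
    have hu0 : u = 0 := by
      by_contra hu0
      apply hγ₂
      have h1 : γ₂ = u⁻¹ * (-v) := by
        have h' : u * γ₂ = -v := eq_neg_of_add_eq_zero_right key
        rw [← h', ← mul_assoc, inv_mul_cancel₀ hu0, one_mul]
      rw [h1]
      exact mul_mem (aux_inv_mem S₁ hu₁ hu0) (neg_mem hv₁)
    obtain ⟨h2, h3⟩ := aux_indep hγ₁ hu0
    have hv0 : v = 0 := by
      rw [hu0, zero_mul, add_zero] at key
      exact key
    obtain ⟨h0, h1⟩ := aux_indep hγ₁ hv0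
    intro i
    fin_cases i <;> assumption
  refine ⟨hind, fun hD => ?_⟩
  haveI : FiniteDimensional F D := FiniteDimensional.of_finrank_pos (by omega)
  apply hind.span_eq_top_of_card_eq_finrank
  simp [hD]
end

section
/- Fix a finite field 𝔽_q with q elements. For a finite set R of monic irreducible polynomials in 𝔽_q[T], let d(R) denote the minimal degree of a monic irreducible polynomial in 𝔽_q[T] not belonging to R. Then the collection of finite sets R of monic irreducible polynomials satisfying (q^{d(R)} − 1) · ∏_{x ∈ R} (q^{deg x} − 1) ≤ 2(q^{2 d(R)} + 1)(q² − 1) is finite. -/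
/-!
Write `d = d(R)` and bound the right-hand side by `q ^ (2d + 4)`. Every monic irreducible
polynomial of degree `< d` lies in `R`, and over a finite field there is one of every positive
degree; so for `d ≥ 11` the factors of degrees `d - 1` and `d - 2`, together with `q ^ d - 1`,
make the left-hand side at least `q ^ (3d - 6) > q ^ (2d + 4)`. Hence `d ≤ 10`, every single
factor `q ^ (deg x) - 1` is at most `q ^ 24`, and `R` is a set of monic polynomials of degree
at most `25`, of which there are only finitely many.
-/

open Polynomial

/-- The minimal degree of a monic irreducible polynomial in `𝔽[T]` not belonging to the
finite set `R`. -/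
noncomputable def minDegMonicIrreducibleNotIn {𝔽 : Type*} [Field 𝔽]
    (R : Finset (Polynomial 𝔽)) : ℕ :=
  sInf {n : ℕ | ∃ p : Polynomial 𝔽, p.Monic ∧ Irreducible p ∧ p ∉ R ∧ p.natDegree = n}

theorem Polynomial.exists_monic_irreducible_natDegree_eq (k : Type*) [Field k] [Finite k]
    {n : ℕ} (hn : n ≠ 0) : ∃ f : k[X], f.Monic ∧ Irreducible f ∧ f.natDegree = n := by
  obtain ⟨p, _⟩ := CharP.exists k
  have : Fact p.Prime := ⟨CharP.char_is_prime k p⟩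
  have : NeZero n := ⟨hn⟩
  obtain ⟨α, hα⟩ := Field.exists_primitive_element_of_finite_top k (FiniteField.Extension k p n)
  have hα_int : IsIntegral k α := .of_finite k α
  refine ⟨minpoly k α, minpoly.monic hα_int, minpoly.irreducible hα_int, ?_⟩
  rw [← IntermediateField.adjoin.finrank hα_int, hα, IntermediateField.finrank_top',
    FiniteField.finrank_extension]

section minDeg

variable {k : Type*} [Field k] {R : Finset k[X]}

theorem mem_of_natDegree_lt_minDegMonicIrreducibleNotIn {f : k[X]} (hm : f.Monic)
    (hi : Irreducible f) (hf : f.natDegree < minDegMonicIrreducibleNotIn R) : f ∈ R := by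
  by_contra hfR
  exact Nat.notMem_of_lt_sInf hf ⟨f, hm, hi, hfR, rfl⟩

theorem minDegMonicIrreducibleNotIn_pos [Finite k] (R : Finset k[X]) :
    0 < minDegMonicIrreducibleNotIn R := by
  obtain ⟨f, hm, hi, hdeg⟩ :=
    exists_monic_irreducible_natDegree_eq k (R.sup natDegree).succ_ne_zero
  have hfR : f ∉ R := fun hf => by
    have := R.le_sup (f := natDegree) hf
    omega
  refine Nat.pos_of_ne_zero fun h => ?_
  rcases Nat.sInf_eq_zero.1 h with ⟨g, -, hg, -, hg0⟩ | hempty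
  · exact hg.natDegree_pos.ne' hg0
  · exact hempty.subset ⟨f, hm, hi, hfR, rfl⟩

end minDeg

theorem Polynomial.finite_setOf_natDegree_le (k : Type*) [Ring k] [Finite k] (N : ℕ) :
    {f : k[X] | f.natDegree ≤ N}.Finite := by
  have : Finite (degreeLT k (N + 1)) := .of_equiv _ (degreeLTEquiv k (N + 1)).toEquiv.symm
  refine (Set.toFinite (degreeLT k (N + 1) : Set k[X])).subset fun f hf => ?_
  rw [SetLike.mem_coe, mem_degreeLT]
  exact degree_le_natDegree.trans_lt (by exact_mod_cast Nat.lt_succ_of_le hf)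

theorem Set.Finite.finite_finset_subsets {α : Type*} {s : Set α} (hs : s.Finite) :
    {t : Finset α | (t : Set α) ⊆ s}.Finite :=
  hs.finite_subsets.preimage Finset.coe_injective.injOn

section arith
variable {Q : ℤ}

theorem one_le_pow_sub_one (hQ : 2 ≤ Q) {n : ℕ} (hn : n ≠ 0) : 1 ≤ Q ^ n - 1 := by
  have := le_self_pow₀ (by omega : 1 ≤ Q) hn
  omega

theorem pow_le_pow_succ_sub_one (hQ : 2 ≤ Q) (n : ℕ) : Q ^ n ≤ Q ^ (n + 1) - 1 := by
  have : 1 ≤ Q ^ n := one_le_pow₀ (by omega)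
  rw [pow_succ]
  nlinarith

theorem two_mul_pow_add_one_mul_sq_sub_one_le (hQ : 2 ≤ Q) (n : ℕ) :
    2 * (Q ^ (2 * n) + 1) * (Q ^ 2 - 1) ≤ Q ^ (2 * n + 4) := by
  have h1 : 1 ≤ Q ^ (2 * n) := one_le_pow₀ (by omega)
  have h4 : 4 ≤ Q ^ 2 := by nlinarith
  calc 2 * (Q ^ (2 * n) + 1) * (Q ^ 2 - 1) ≤ 4 * Q ^ (2 * n) * Q ^ 2 := by nlinarith
    _ ≤ Q ^ (2 * n) * Q ^ 2 * Q ^ 2 := by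
      have : 0 ≤ Q ^ (2 * n) * Q ^ 2 := by nlinarith
      nlinarith
    _ = Q ^ (2 * n + 4) := by ring

end arith

section bound

variable {k : Type*} [Field k] {R : Finset k[X]} {Q : ℤ}

theorem prod_pow_natDegree_sub_one_le_of_subset (hQ : 2 ≤ Q) (hR : ∀ x ∈ R, Irreducible x)
    {T : Finset k[X]} (hT : T ⊆ R) :
    ∏ x ∈ T, (Q ^ x.natDegree - 1) ≤ ∏ x ∈ R, (Q ^ x.natDegree - 1) :=
  Finset.prod_le_prod_of_subset_of_one_le hT
    (fun x hx => zero_le_one.trans (one_le_pow_sub_one hQ (hR x (hT hx)).natDegree_pos.ne'))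
    (fun x hx _ => one_le_pow_sub_one hQ (hR x hx).natDegree_pos.ne')

variable [Finite k]

theorem minDegMonicIrreducibleNotIn_le_ten_of_prod_le (hQ : 2 ≤ Q)
    (hR : ∀ x ∈ R, Irreducible x)
    (h : (Q ^ minDegMonicIrreducibleNotIn R - 1) * ∏ x ∈ R, (Q ^ x.natDegree - 1) ≤
      Q ^ (2 * minDegMonicIrreducibleNotIn R + 4)) :
    minDegMonicIrreducibleNotIn R ≤ 10 := by
  classical
  by_contra! hd
  obtain ⟨e, he⟩ : ∃ e, minDegMonicIrreducibleNotIn R = e + 11 :=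
    ⟨_, (Nat.sub_add_cancel hd).symm⟩
  rw [he] at h
  obtain ⟨f, hfm, hfi, hfd⟩ := exists_monic_irreducible_natDegree_eq k (n := e + 10) (by omega)
  obtain ⟨g, hgm, hgi, hgd⟩ := exists_monic_irreducible_natDegree_eq k (n := e + 9) (by omega)
  have hfR := mem_of_natDegree_lt_minDegMonicIrreducibleNotIn (R := R) hfm hfi (by omega)
  have hgR := mem_of_natDegree_lt_minDegMonicIrreducibleNotIn (R := R) hgm hgi (by omega)
  have hfg : f ≠ g := fun hfg => by rw [hfg, hgd] at hfd; omega
  have hpair : (Q ^ (e + 10) - 1) * (Q ^ (e + 9) - 1) ≤ ∏ x ∈ R, (Q ^ x.natDegree - 1) := by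
    have := prod_pow_natDegree_sub_one_le_of_subset hQ hR (Finset.insert_subset hfR
      (Finset.singleton_subset_iff.2 hgR))
    rwa [Finset.prod_pair hfg, hfd, hgd] at this
  have h9 := one_le_pow_sub_one hQ (n := e + 9) (by omega)
  have h10 := one_le_pow_sub_one hQ (n := e + 10) (by omega)
  have h11 := one_le_pow_sub_one hQ (n := e + 11) (by omega)
  have key : Q ^ (3 * e + 27) ≤ Q ^ (2 * (e + 11) + 4) := calc
    Q ^ (3 * e + 27) = Q ^ (e + 10) * (Q ^ (e + 9) * Q ^ (e + 8)) := by ring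
    _ ≤ (Q ^ (e + 11) - 1) * ((Q ^ (e + 10) - 1) * (Q ^ (e + 9) - 1)) := by
      gcongr ?_ * (?_ * ?_) <;> first | omega | exact pow_le_pow_succ_sub_one hQ _
    _ ≤ (Q ^ (e + 11) - 1) * ∏ x ∈ R, (Q ^ x.natDegree - 1) := by gcongr
    _ ≤ Q ^ (2 * (e + 11) + 4) := h
  have := (pow_le_pow_iff_right₀ (by omega : 1 < Q)).1 key
  omega

theorem natDegree_le_of_mem_of_prod_le (hQ : 2 ≤ Q) (hR : ∀ x ∈ R, Irreducible x)
    (h : (Q ^ minDegMonicIrreducibleNotIn R - 1) * ∏ x ∈ R, (Q ^ x.natDegree - 1) ≤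
      Q ^ (2 * minDegMonicIrreducibleNotIn R + 4))
    {f : k[X]} (hf : f ∈ R) : f.natDegree ≤ 25 := by
  have hd := minDegMonicIrreducibleNotIn_le_ten_of_prod_le hQ hR h
  have hfd := (hR f hf).natDegree_pos
  have key : Q ^ (f.natDegree - 1) ≤ Q ^ 24 := calc
    Q ^ (f.natDegree - 1) ≤ Q ^ f.natDegree - 1 := by
      simpa [Nat.sub_add_cancel hfd] using pow_le_pow_succ_sub_one hQ (f.natDegree - 1)
    _ ≤ ∏ x ∈ R, (Q ^ x.natDegree - 1) := by
      simpa using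
        prod_pow_natDegree_sub_one_le_of_subset hQ hR (Finset.singleton_subset_iff.2 hf)
    _ ≤ (Q ^ minDegMonicIrreducibleNotIn R - 1) * ∏ x ∈ R, (Q ^ x.natDegree - 1) :=
      le_mul_of_one_le_left (Finset.prod_nonneg fun x hx => by
          linarith [one_le_pow_sub_one hQ (hR x hx).natDegree_pos.ne'])
        (one_le_pow_sub_one hQ (minDegMonicIrreducibleNotIn_pos R).ne')
    _ ≤ Q ^ (2 * minDegMonicIrreducibleNotIn R + 4) := h
    _ ≤ Q ^ 24 := pow_le_pow_right₀ (by omega) (by omega)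
  have := (pow_le_pow_iff_right₀ (by omega : 1 < Q)).1 key
  omega

end bound

/-- For a fixed finite field `𝔽_q`, the collection of finite sets `R` of monic irreducible
polynomials in `𝔽_q[T]` satisfying
`(q^{d(R)} − 1) · ∏_{x ∈ R} (q^{deg x} − 1) ≤ 2(q^{2 d(R)} + 1)(q² − 1)`,
where `d(R)` is the minimal degree of a monic irreducible polynomial not in `R`, is finite. -/
theorem finitely_many_ramification_sets (𝔽 : Type*) [Field 𝔽] [Fintype 𝔽] (q : ℕ)
    (hq : Fintype.card 𝔽 = q) :
    {R : Finset (Polynomial 𝔽) | (∀ x ∈ R, x.Monic ∧ Irreducible x) ∧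
      ((q : ℤ) ^ minDegMonicIrreducibleNotIn R - 1) *
          ∏ x ∈ R, ((q : ℤ) ^ x.natDegree - 1) ≤
        2 * ((q : ℤ) ^ (2 * minDegMonicIrreducibleNotIn R) + 1) * ((q : ℤ) ^ 2 - 1)}.Finite := by
  have hQ : (2 : ℤ) ≤ q := by rw [← hq]; exact_mod_cast Fintype.one_lt_card
  refine (finite_setOf_natDegree_le 𝔽 25).finite_finset_subsets.subset ?_
  rintro R ⟨hR, hineq⟩ x hx
  exact natDegree_le_of_mem_of_prod_le hQ (fun x hx => (hR x hx).2)
    (hineq.trans (two_mul_pow_add_one_mul_sq_sub_one_le hQ _)) hx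
end
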